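/- arXiv:1101.2973 — 8 statements merged into one kernel-verified Lean document; each statement's English description precedes it below -/
import Mathlib

section
/- Let f be a nonnegative submodular function on a finite ground set X. For any sets C, S₁ ⊆ X, let C' = C \ S₁, and let S₂ be any subset of X \ S₁. Then f(S₁ ∪ C) + f(S₁ ∩ C) + f(S₂ ∪ C') ≥ f(C). -/
/-!
Apply submodularity twice and discard the extra terms by nonnegativity: first
`f(S₁ ∩ C) + f(S₂ ∪ C') ≥ f(C ∪ S₂)`, the two sets having union `C ∪ S₂`; then
`f(S₁ ∪ C) + f(C ∪ S₂) ≥ f(C)`, since `S₁ ∩ S₂ = ∅` makes the intersection of these sets `C`.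
-/

namespace Finset

variable {α : Type*} [DecidableEq α] {X : Finset α} {f : Finset α → ℝ}

theorem union_le_add_of_submodularOn
    (hsub : ∀ A ⊆ X, ∀ B ⊆ X, f A + f B ≥ f (A ∪ B) + f (A ∩ B))
    (hnonneg : ∀ A ⊆ X, 0 ≤ f A) {A B : Finset α} (hA : A ⊆ X) (hB : B ⊆ X) :
    f (A ∪ B) ≤ f A + f B := by
  linarith [hsub A hA B hB, hnonneg (A ∩ B) (inter_subset_left.trans hA)]

theorem inter_le_add_of_submodularOn
    (hsub : ∀ A ⊆ X, ∀ B ⊆ X, f A + f B ≥ f (A ∪ B) + f (A ∩ B))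
    (hnonneg : ∀ A ⊆ X, 0 ≤ f A) {A B : Finset α} (hA : A ⊆ X) (hB : B ⊆ X) :
    f (A ∩ B) ≤ f A + f B := by
  linarith [hsub A hA B hB, hnonneg (A ∪ B) (union_subset hA hB)]

theorem inter_union_union_sdiff (S T C : Finset α) :
    S ∩ C ∪ (T ∪ C \ S) = C ∪ T := by
  ext; simp only [mem_union, mem_inter, mem_sdiff]; tauto

theorem union_inter_union_of_disjoint {S T : Finset α} (h : Disjoint S T) (C : Finset α) :
    (S ∪ C) ∩ (C ∪ T) = C := by
  rw [union_comm S, ← union_inter_distrib_left, disjoint_iff_inter_eq_empty.mp h, union_empty]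

end Finset

open Finset in
/-- Lemma of Gupta et al..
Let `f` be a nonnegative submodular function on a finite ground set `X`.
For any `C, S₁ ⊆ X`, with `C' = C \ S₁`, and any `S₂ ⊆ X \ S₁`,
`f(S₁ ∪ C) + f(S₁ ∩ C) + f(S₂ ∪ C') ≥ f(C)`. -/
theorem stmt_0 {α : Type*} [DecidableEq α] (X : Finset α) (f : Finset α → ℝ)
    (hsub : ∀ A ⊆ X, ∀ B ⊆ X, f A + f B ≥ f (A ∪ B) + f (A ∩ B))
    (hnonneg : ∀ A ⊆ X, 0 ≤ f A)
    (C S₁ S₂ : Finset α) (hC : C ⊆ X) (hS₁ : S₁ ⊆ X) (hS₂ : S₂ ⊆ X \ S₁) :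
    f (S₁ ∪ C) + f (S₁ ∩ C) + f (S₂ ∪ (C \ S₁)) ≥ f C := by
  have hS₂X : S₂ ⊆ X := hS₂.trans sdiff_subset
  have hdisj : Disjoint S₁ S₂ := disjoint_sdiff.mono_right hS₂
  have h₁ : f (C ∪ S₂) ≤ f (S₁ ∩ C) + f (S₂ ∪ C \ S₁) := by
    rw [← inter_union_union_sdiff S₁ S₂ C]
    exact union_le_add_of_submodularOn hsub hnonneg (inter_subset_left.trans hS₁)
      (union_subset hS₂X (sdiff_subset.trans hC))
  have h₂ : f C ≤ f (S₁ ∪ C) + f (C ∪ S₂) := by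
    conv_lhs => rw [← union_inter_union_of_disjoint hdisj C]
    exact inter_le_add_of_submodularOn hsub hnonneg (union_subset hS₁ hC) (union_subset hC hS₂X)
  linarith
end

section
/- Let f be a nonnegative submodular function on a finite ground set X and let k be a natural number. Suppose S₁ ⊆ X with |S₁| = k satisfies 2·f(S₁) ≥ f(S₁ ∪ C) + f(S₁ ∩ C) for every C ⊆ X with |C| = k, and suppose S₂ ⊆ X \ S₁ satisfies 2·f(S₂) ≥ f(S₂ ∪ C') for every C' ⊆ X \ S₁ with |C'| ≤ k. Then for every C ⊆ X with |C| = k, max(f(S₁), f(S₂)) ≥ f(C)/4. -/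
/-!
With `D = C \ S₁`, the two local optimality conditions give
`2 f(S₁) + 2 f(S₂) ≥ f(S₁ ∪ C) + f(S₁ ∩ C) + f(S₂ ∪ D)`.
Since `S₂` avoids `S₁`, `(S₂ ∪ D) ∩ (S₁ ∪ C) = D`, so submodularity and nonnegativity
give `f(S₂ ∪ D) + f(S₁ ∪ C) ≥ f(D)`, and then `f(S₁ ∩ C) + f(D) ≥ f(C)` because
`(S₁ ∩ C) ∪ D = C`. Hence `4 max(f(S₁), f(S₂)) ≥ 2 f(S₁) + 2 f(S₂) ≥ f(C)`.
-/

open Finset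

section Submodular

variable {α : Type*} [DecidableEq α] {X : Finset α} {f : Finset α → ℝ}

theorem submodular_inter_le_add
    (hsub : ∀ A ⊆ X, ∀ B ⊆ X, f A + f B ≥ f (A ∪ B) + f (A ∩ B))
    (hnonneg : ∀ A ⊆ X, 0 ≤ f A) {A B : Finset α} (hA : A ⊆ X) (hB : B ⊆ X) :
    f (A ∩ B) ≤ f A + f B := by
  linarith [hsub A hA B hB, hnonneg (A ∪ B) (union_subset hA hB)]

theorem submodular_union_le_add
    (hsub : ∀ A ⊆ X, ∀ B ⊆ X, f A + f B ≥ f (A ∪ B) + f (A ∩ B))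
    (hnonneg : ∀ A ⊆ X, 0 ≤ f A) {A B : Finset α} (hA : A ⊆ X) (hB : B ⊆ X) :
    f (A ∪ B) ≤ f A + f B := by
  linarith [hsub A hA B hB, hnonneg (A ∩ B) (inter_subset_left.trans hA)]

end Submodular

theorem union_sdiff_inter_union_eq_sdiff {α : Type*} [DecidableEq α] {S T C : Finset α}
    (h : Disjoint T S) : (T ∪ C \ S) ∩ (S ∪ C) = C \ S := by
  ext x
  have hx : x ∈ T → x ∉ S := fun hT => disjoint_left.1 h hT
  simp only [mem_inter, mem_union, mem_sdiff]
  tauto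

theorem stmt_1_general {α : Type*} [DecidableEq α] (X : Finset α) (f : Finset α → ℝ)
    (hsub : ∀ A ⊆ X, ∀ B ⊆ X, f A + f B ≥ f (A ∪ B) + f (A ∩ B))
    (hnonneg : ∀ A ⊆ X, 0 ≤ f A)
    (k : ℕ) (S₁ S₂ : Finset α)
    (hS₁X : S₁ ⊆ X)
    (hS₁ : ∀ C ⊆ X, C.card = k → 2 * f S₁ ≥ f (S₁ ∪ C) + f (S₁ ∩ C))
    (hS₂X : S₂ ⊆ X \ S₁)
    (hS₂ : ∀ C' ⊆ X \ S₁, C'.card ≤ k → 2 * f S₂ ≥ f (S₂ ∪ C'))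
    (C : Finset α) (hC : C ⊆ X) (hCcard : C.card = k) :
    max (f S₁) (f S₂) ≥ f C / 4 := by
  have hDS : C \ S₁ ⊆ X \ S₁ := sdiff_subset_sdiff hC subset_rfl
  have hDX : C \ S₁ ⊆ X := hDS.trans sdiff_subset
  have hS₁C := hS₁ C hC hCcard
  have hS₂D := hS₂ (C \ S₁) hDS (hCcard ▸ card_le_card sdiff_subset)
  have hD : f (C \ S₁) ≤ f (S₂ ∪ C \ S₁) + f (S₁ ∪ C) := by
    have := submodular_inter_le_add hsub hnonneg
      (union_subset (hS₂X.trans sdiff_subset) hDX) (union_subset hS₁X hC)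
    rwa [union_sdiff_inter_union_eq_sdiff (subset_sdiff.1 hS₂X).2] at this
  have hCle : f C ≤ f (S₁ ∩ C) + f (C \ S₁) := by
    have hcup : S₁ ∩ C ∪ C \ S₁ = C := by rw [union_comm, inter_comm, sdiff_union_inter]
    have := submodular_union_le_add hsub hnonneg
      (inter_subset_left.trans hS₁X : S₁ ∩ C ⊆ X) hDX
    rwa [hcup] at this
  linarith [le_max_left (f S₁) (f S₂), le_max_right (f S₁) (f S₂)]

/-- Combining the local-search solution `S₁` and the greedy solution `S₂` gives a
`1/4`-approximation for the exact cardinality constraint. -/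
theorem stmt_1 {α : Type*} [DecidableEq α] (X : Finset α) (f : Finset α → ℝ)
    (hsub : ∀ A ⊆ X, ∀ B ⊆ X, f A + f B ≥ f (A ∪ B) + f (A ∩ B))
    (hnonneg : ∀ A ⊆ X, 0 ≤ f A)
    (k : ℕ) (S₁ S₂ : Finset α)
    (hS₁X : S₁ ⊆ X) (hS₁card : S₁.card = k)
    (hS₁ : ∀ C ⊆ X, C.card = k → 2 * f S₁ ≥ f (S₁ ∪ C) + f (S₁ ∩ C))
    (hS₂X : S₂ ⊆ X \ S₁)
    (hS₂ : ∀ C' ⊆ X \ S₁, C'.card ≤ k → 2 * f S₂ ≥ f (S₂ ∪ C'))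
    (C : Finset α) (hC : C ⊆ X) (hCcard : C.card = k) :
    max (f S₁) (f S₂) ≥ f C / 4 :=
  stmt_1_general X f hsub hnonneg k S₁ S₂ hS₁X hS₁ hS₂X hS₂ C hC hCcard
end

section
/- Let f be a submodular function on the ground set {1,…,n} with multilinear extension F, let y ∈ [0,1]^n, and let v ∈ ℝ^n with v ≥ 0 componentwise. Then the function ξ ↦ F(y + ξ·v) is concave on the interval I = {ξ ≥ 0 : y + ξ·v ∈ [0,1]^n}. -/
/-!
Along the line `x = y + ξ v`, every term of `F` is a product of affine factors `x i` or
`1 - x i`, so `F(y + ξ v)` is a polynomial in `ξ`. Differentiating twice, and using that each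
factor is affine, the second derivative is `∑_{i ≠ j} v i v j ∂ᵢ∂ⱼF`. Grouping the subsets `S` by
`t = S \ {i, j}` writes `∂ᵢ∂ⱼF` as a nonnegative combination of the second differences
`f (t ∪ {i, j}) + f t - f (t ∪ {i}) - f (t ∪ {j})`, which are `≤ 0` by submodularity.
-/

open Finset

/-- The multilinear extension of a set function `f` on the ground set `Fin n`,
regarded (by the same polynomial formula) as a function on all of `ℝⁿ`. -/
noncomputable def multilinearExt {n : ℕ} (f : Finset (Fin n) → ℝ)
    (x : Fin n → ℝ) : ℝ :=
  ∑ S : Finset (Fin n), f S * ((∏ i ∈ S, x i) * ∏ i ∈ Sᶜ, (1 - x i))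

lemma sum_eq_sum_powerset_erase_erase {α M : Type*} [DecidableEq α] [Fintype α]
    [AddCommMonoid M] {i j : α} (hij : i ≠ j) (F : Finset α → M) :
    ∑ S, F S = ∑ t ∈ ((univ.erase i).erase j).powerset,
      (F t + F (insert i t) + F (insert j t) + F (insert i (insert j t))) := by
  have hjs : j ∉ (univ.erase i).erase j := notMem_erase j _
  have his : i ∉ insert j ((univ.erase i).erase j) := by simp [hij]
  have huniv : (univ : Finset α) = insert i (insert j ((univ.erase i).erase j)) := by
    rw [insert_erase (mem_erase.2 ⟨hij.symm, mem_univ j⟩), insert_erase (mem_univ i)]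
  conv_lhs => rw [← powerset_univ, huniv]
  rw [sum_powerset_insert his, sum_powerset_insert hjs, sum_powerset_insert hjs]
  simp only [sum_add_distrib]
  abel

lemma add_le_add_insert_of_submodular {α β : Type*} [DecidableEq α] [Add β] [LE β]
    {f : Finset α → β}
    (hsub : ∀ A B : Finset α, f A + f B ≥ f (A ∪ B) + f (A ∩ B)) {i j : α} {t : Finset α}
    (hij : i ≠ j) (hi : i ∉ t) (hj : j ∉ t) :
    f (insert i (insert j t)) + f t ≤ f (insert i t) + f (insert j t) := by
  have h := hsub (insert i t) (insert j t)
  rwa [insert_union, union_insert, union_self, insert_inter_of_notMem (by simp [hij, hi]),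
    inter_insert_of_notMem hj, inter_self] at h

namespace MultilinearLine

variable {ι : Type*} [DecidableEq ι]

def factor (y v : ι → ℝ) (S : Finset ι) (i : ι) (ξ : ℝ) : ℝ :=
  if i ∈ S then y i + ξ * v i else 1 - (y i + ξ * v i)

def slope (v : ι → ℝ) (S : Finset ι) (i : ι) : ℝ :=
  if i ∈ S then v i else -v i

variable (y v : ι → ℝ)

lemma hasDerivAt_factor (S : Finset ι) (i : ι) (ξ : ℝ) :
    HasDerivAt (factor y v S i) (slope v S i) ξ := by
  have h := ((hasDerivAt_id ξ).mul_const (v i)).const_add (y i)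
  unfold factor slope
  split_ifs
  · simpa using h
  · simpa using h.const_sub 1

lemma factor_nonneg {S : Finset ι} {i : ι} {ξ : ℝ} (h : y i + ξ * v i ∈ Set.Icc (0 : ℝ) 1) :
    0 ≤ factor y v S i ξ := by
  obtain ⟨h₀, h₁⟩ := h
  unfold factor
  split_ifs <;> linarith

lemma prod_factor_insert {s S : Finset ι} {j : ι} (hj : j ∉ s) (ξ : ℝ) :
    ∏ k ∈ s, factor y v (insert j S) k ξ = ∏ k ∈ s, factor y v S k ξ :=
  prod_congr rfl fun k hk => by
    simp only [factor, mem_insert, ne_of_mem_of_not_mem hk hj, false_or]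

variable [Fintype ι]

def weightedSum (c : Finset ι → ℝ) (s : Finset ι) (ξ : ℝ) : ℝ :=
  ∑ S, c S * ∏ k ∈ s, factor y v S k ξ

lemma hasDerivAt_weightedSum (c : Finset ι → ℝ) (s : Finset ι) (ξ : ℝ) :
    HasDerivAt (weightedSum y v c s)
      (∑ i ∈ s, weightedSum y v (fun S => c S * slope v S i) (s.erase i) ξ) ξ := by
  have h := HasDerivAt.fun_sum fun S (_ : S ∈ univ) =>
    (HasDerivAt.fun_finsetProd fun k (_ : k ∈ s) => hasDerivAt_factor y v S k ξ).const_mul (c S)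
  refine h.congr_deriv ?_
  simp only [weightedSum, smul_eq_mul, mul_sum]
  rw [sum_comm]
  exact sum_congr rfl fun i _ => sum_congr rfl fun S _ => by ring

lemma weightedSum_mul_slope_mul_slope_nonpos {f : Finset ι → ℝ}
    (hsub : ∀ A B : Finset ι, f A + f B ≥ f (A ∪ B) + f (A ∩ B)) {i j : ι} (hij : i ≠ j)
    (hvi : 0 ≤ v i) (hvj : 0 ≤ v j) {ξ : ℝ} (hξ : ∀ k, y k + ξ * v k ∈ Set.Icc (0 : ℝ) 1) :
    weightedSum y v (fun S => f S * slope v S i * slope v S j) ((univ.erase i).erase j) ξ ≤ 0 := by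
  have his : i ∉ (univ.erase i).erase j := fun h => notMem_erase i _ (mem_of_mem_erase h)
  have hjs : j ∉ (univ.erase i).erase j := notMem_erase j _
  rw [weightedSum, sum_eq_sum_powerset_erase_erase hij]
  refine sum_nonpos fun t ht => ?_
  have hit : i ∉ t := fun h => his (mem_powerset.1 ht h)
  have hjt : j ∉ t := fun h => hjs (mem_powerset.1 ht h)
  have hP : 0 ≤ ∏ k ∈ (univ.erase i).erase j, factor y v t k ξ :=
    prod_nonneg fun k _ => factor_nonneg y v (hξ k)
  have hf := add_le_add_insert_of_submodular hsub hij hit hjt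
  simp only [prod_factor_insert y v his, prod_factor_insert y v hjs, slope, mem_insert, hit, hjt,
    hij, hij.symm, or_true, or_false, if_true, if_false]
  nlinarith [mul_le_mul_of_nonneg_right hf (mul_nonneg (mul_nonneg hvi hvj) hP)]

end MultilinearLine

lemma convex_setOf_add_mul_mem_Icc {ι : Type*} {y v : ι → ℝ} (hv : ∀ i, 0 ≤ v i) :
    Convex ℝ {ξ : ℝ | 0 ≤ ξ ∧ ∀ i, y i + ξ * v i ∈ Set.Icc (0 : ℝ) 1} := by
  refine convex_iff_ordConnected.2 ⟨fun a ha b hb ξ hξ => ⟨ha.1.trans hξ.1, fun i => ⟨?_, ?_⟩⟩⟩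
  · linarith [(ha.2 i).1, mul_le_mul_of_nonneg_right hξ.1 (hv i)]
  · linarith [(hb.2 i).2, mul_le_mul_of_nonneg_right hξ.2 (hv i)]

lemma multilinearExt_add_mul_eq_weightedSum {n : ℕ} (f : Finset (Fin n) → ℝ) (y v : Fin n → ℝ)
    (ξ : ℝ) :
    multilinearExt f (fun i => y i + ξ * v i) = MultilinearLine.weightedSum y v f univ ξ := by
  refine sum_congr rfl fun S _ => ?_
  simp [MultilinearLine.factor, prod_ite, compl_eq_univ_sdiff, sdiff_eq_filter]

theorem stmt_6_general {n : ℕ} (f : Finset (Fin n) → ℝ)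
    (hsub : ∀ A B : Finset (Fin n), f A + f B ≥ f (A ∪ B) + f (A ∩ B))
    (y v : Fin n → ℝ)
    (hv : ∀ i, 0 ≤ v i) :
    ConcaveOn ℝ {ξ : ℝ | 0 ≤ ξ ∧ ∀ i, y i + ξ * v i ∈ Set.Icc (0 : ℝ) 1}
      (fun ξ => multilinearExt f (fun i => y i + ξ * v i)) := by
  have hF' (ξ : ℝ) := MultilinearLine.hasDerivAt_weightedSum y v f univ ξ
  have hF'' (ξ : ℝ) := HasDerivAt.fun_sum fun i (_ : i ∈ univ) =>
    MultilinearLine.hasDerivAt_weightedSum y v (fun S => f S * MultilinearLine.slope v S i)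
      (univ.erase i) ξ
  simp only [multilinearExt_add_mul_eq_weightedSum]
  refine concaveOn_of_hasDerivWithinAt2_nonpos (convex_setOf_add_mul_mem_Icc hv)
    (fun ξ _ => (hF' ξ).continuousAt.continuousWithinAt) (fun ξ _ => (hF' ξ).hasDerivWithinAt)
    (fun ξ _ => (hF'' ξ).hasDerivWithinAt) fun ξ hξ => ?_
  exact sum_nonpos fun i _ => sum_nonpos fun j hj =>
    MultilinearLine.weightedSum_mul_slope_mul_slope_nonpos y v hsub (ne_of_mem_erase hj).symm
      (hv i) (hv j) (interior_subset hξ).2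

/-- For a submodular `f` with multilinear extension `F`, `y ∈ [0,1]ⁿ` and `v ≥ 0`,
the function `ξ ↦ F(y + ξ·v)` is concave on
`I = {ξ ≥ 0 : y + ξ·v ∈ [0,1]ⁿ}`. -/
theorem stmt_6 {n : ℕ} (f : Finset (Fin n) → ℝ)
    (hsub : ∀ A B : Finset (Fin n), f A + f B ≥ f (A ∪ B) + f (A ∩ B))
    (y v : Fin n → ℝ)
    (hy : ∀ i, y i ∈ Set.Icc (0 : ℝ) 1) (hv : ∀ i, 0 ≤ v i) :
    ConcaveOn ℝ {ξ : ℝ | 0 ≤ ξ ∧ ∀ i, y i + ξ * v i ∈ Set.Icc (0 : ℝ) 1}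
      (fun ξ => multilinearExt f (fun i => y i + ξ * v i)) :=
  stmt_6_general f hsub y v hv
end

section
/- Let f be a submodular function on the ground set {1,…,n} with f(∅) ≥ 0 and multilinear extension F. Then for every S ⊆ {1,…,n} and every t ∈ [0,1], F(t·1_S) ≥ t·f(S), where 1_S denotes the indicator vector of S. -/
open Finset

/-!
Writing `F(t·1_S)` as the expectation of `f(R)` for a random subset `R ⊆ S` containing each
element independently with probability `t`, we prove the stronger bound
`E f(R) ≥ t f(S) + (1 - t) f(∅)` by induction on `S`. Conditioning on whether a new element `a`
lies in `R` splits the expectation into `(1 - t) E f(R) + t E f(R ∪ {a})`; the induction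
hypothesis applies to both (`A ↦ f (insert a A)` is again submodular), and the cross term
`t (1 - t) (f S + f {a})` is bounded below by `t (1 - t) (f (insert a S) + f ∅)` by submodularity.
-/

section BinomialAverage

variable {α : Type*} [DecidableEq α]

/-- The expectation of `f R` for a random subset `R ⊆ S` that contains each element of `S`
independently with probability `t`. -/
def binomialAverage (t : ℝ) (f : Finset α → ℝ) (S : Finset α) : ℝ :=
  ∑ T ∈ S.powerset, t ^ #T * (1 - t) ^ #(S \ T) * f T

@[simp]
lemma binomialAverage_empty (t : ℝ) (f : Finset α → ℝ) :
    binomialAverage t f ∅ = f ∅ := by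
  simp [binomialAverage]

lemma binomialAverage_insert (t : ℝ) (f : Finset α → ℝ) {a : α} {S : Finset α} (ha : a ∉ S) :
    binomialAverage t f (insert a S) =
      (1 - t) * binomialAverage t f S + t * binomialAverage t (fun A ↦ f (insert a A)) S := by
  simp only [binomialAverage, sum_powerset_insert ha, mul_sum]
  congr 1 <;> refine sum_congr rfl fun T hT ↦ ?_
  · have haT : a ∉ T := fun h ↦ ha (mem_powerset.mp hT h)
    rw [insert_sdiff_of_notMem _ haT, card_insert_of_notMem (by simp [ha])]
    ring
  · have haT : a ∉ T := fun h ↦ ha (mem_powerset.mp hT h)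
    rw [insert_sdiff_insert, sdiff_insert_of_notMem ha, card_insert_of_notMem haT]
    ring

lemma submodular_insert {f : Finset α → ℝ} (hsub : ∀ A B, f A + f B ≥ f (A ∪ B) + f (A ∩ B))
    (a : α) (A B : Finset α) :
    f (insert a A) + f (insert a B) ≥ f (insert a (A ∪ B)) + f (insert a (A ∩ B)) := by
  simpa only [← insert_union_distrib, ← insert_inter_distrib] using
    hsub (insert a A) (insert a B)

theorem le_binomialAverage {f : Finset α → ℝ}
    (hsub : ∀ A B, f A + f B ≥ f (A ∪ B) + f (A ∩ B)) {t : ℝ} (ht0 : 0 ≤ t) (ht1 : t ≤ 1)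
    (S : Finset α) : t * f S + (1 - t) * f ∅ ≤ binomialAverage t f S := by
  induction S using Finset.induction_on generalizing f with
  | empty => rw [binomialAverage_empty]; linarith
  | @insert a S ha ih =>
    have hS := ih hsub
    have haS := ih (submodular_insert hsub a)
    have hcross : f (insert a S) + f ∅ ≤ f {a} + f S := by
      simpa [← insert_eq, ha] using hsub {a} S
    rw [binomialAverage_insert t f ha]
    simp only [insert_empty] at haS
    nlinarith [mul_nonneg ht0 (sub_nonneg.mpr ht1)]

end BinomialAverage

lemma prod_indicator_mul_prod_compl {n : ℕ} (S T : Finset (Fin n)) (t : ℝ) :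
    (∏ i ∈ T, if i ∈ S then t else 0) * ∏ i ∈ Tᶜ, (1 - if i ∈ S then t else 0) =
      if T ⊆ S then t ^ #T * (1 - t) ^ #(S \ T) else 0 := by
  have hcompl : ∏ i ∈ Tᶜ, (1 - if i ∈ S then t else 0) = (1 - t) ^ #(S \ T) := by
    simp_rw [sub_ite, sub_zero]
    rw [prod_ite_mem, prod_const, inter_comm, ← sdiff_eq_inter_compl]
  split_ifs with hTS
  · rw [prod_congr rfl fun i hi ↦ if_pos (hTS hi), prod_const, hcompl]
  · obtain ⟨i, hiT, hiS⟩ := not_subset.mp hTS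
    rw [prod_eq_zero hiT (if_neg hiS), zero_mul]

theorem multilinearExt_indicator {n : ℕ} (f : Finset (Fin n) → ℝ) (S : Finset (Fin n)) (t : ℝ) :
    multilinearExt f (fun i ↦ if i ∈ S then t else 0) = binomialAverage t f S := by
  simp_rw [multilinearExt, prod_indicator_mul_prod_compl, mul_ite, mul_zero, ← sum_filter]
  rw [binomialAverage, filter_subset_univ]
  exact sum_congr rfl fun T _ ↦ mul_comm _ _

/-- For a submodular `f` with `f(∅) ≥ 0` and multilinear extension `F`,
for every `S ⊆ {1,…,n}` and `t ∈ [0,1]`, `F(t·1_S) ≥ t·f(S)`. -/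
theorem stmt_7 {n : ℕ} (f : Finset (Fin n) → ℝ)
    (hsub : ∀ A B : Finset (Fin n), f A + f B ≥ f (A ∪ B) + f (A ∩ B))
    (hempty : 0 ≤ f ∅)
    (S : Finset (Fin n)) (t : ℝ) (ht : t ∈ Set.Icc (0 : ℝ) 1) :
    multilinearExt f (fun i => if i ∈ S then t else 0) ≥ t * f S := by
  obtain ⟨ht0, ht1⟩ := ht
  rw [multilinearExt_indicator]
  have := le_binomialAverage hsub ht0 ht1 S
  nlinarith [mul_nonneg (sub_nonneg.mpr ht1) hempty]
end

section
/- Let f be a submodular function on the ground set {1,…,n} with multilinear extension F. Let y ∈ [0,1]^n and v ∈ ℝ^n with v ≥ 0 componentwise and y + v ∈ [0,1]^n. Then F(y + v) − F(y) ≤ ∑_{j=1}^{n} v_j · (F(y[j:=1]) − F(y[j:=0])), where y[j:=c] denotes the vector y with its j-th coordinate replaced by c. -/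
open Finset

/-!
Splitting the sum defining `F` according to whether `j ∈ S` shows that `F` is affine in `x j`,
interpolating between `F(x[j:=0])` and `F(x[j:=1])`, which are the multilinear extensions of
`S ↦ f (S \ {j})` and `S ↦ f (S ∪ {j})`. Hence `∂F/∂x_j` is the multilinear extension of the
marginal `S ↦ f (S ∪ {j}) - f (S \ {j})`. Submodularity makes this marginal antitone, and the
multilinear extension of an antitone set function is antitone on `[0,1]ⁿ`, because its partial
derivatives are extensions of nonpositive functions. Moving from `y` to `y + v` one coordinate
at a time, the `j`-th step changes `F` by `v j` times `∂F/∂x_j` at a point `≥ y`, which is at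
most `v j * ∂F/∂x_j (y)`.
-/

open Function

section Marginal

variable {α β : Type*} [DecidableEq α]

def IsSubmodular [Add β] [LE β] (f : Finset α → β) : Prop :=
  ∀ A B : Finset α, f A + f B ≥ f (A ∪ B) + f (A ∩ B)

def marginal [Sub β] (f : Finset α → β) (j : α) (S : Finset α) : β :=
  f (insert j S) - f (S.erase j)

variable [AddCommGroup β] [PartialOrder β] [IsOrderedAddMonoid β]

theorem IsSubmodular.antitone_marginal {f : Finset α → β} (hf : IsSubmodular f) (j : α) :
    Antitone (marginal f j) := by
  intro S T hST
  have hunion : insert j S ∪ T.erase j = insert j T := by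
    ext i; by_cases hi : i = j <;> simp [hi]; exact fun h => hST h
  have hinter : insert j S ∩ T.erase j = S.erase j := by
    ext i; by_cases hi : i = j <;> simp [hi]; exact fun h => hST h
  have h := hf (insert j S) (T.erase j)
  rw [hunion, hinter] at h
  simp only [marginal, sub_le_sub_iff]
  exact h

theorem Antitone.marginal_nonpos {f : Finset α → β} (hf : Antitone f) (j : α)
    (S : Finset α) : marginal f j S ≤ 0 :=
  sub_nonpos.2 <| hf <| (erase_subset j S).trans (subset_insert j S)

end Marginal

section CoordPath

variable {n : ℕ} {α : Type*}

def coordPath (x x' : Fin n → α) (m : ℕ) : Fin n → α :=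
  fun i => if (i : ℕ) < m then x' i else x i

theorem coordPath_apply_self (x x' : Fin n → α) (j : Fin n) : coordPath x x' j j = x j := by
  simp [coordPath]

theorem coordPath_succ (x x' : Fin n → α) (j : Fin n) :
    coordPath x x' (j + 1) = update (coordPath x x' j) j (x' j) := by
  funext i
  rcases eq_or_ne i j with rfl | hij
  · simp [coordPath]
  · have : (i : ℕ) < j + 1 ↔ (i : ℕ) < j := by grind [Fin.val_inj]
    simp [coordPath, hij, this]

theorem coordPath_mem {s : Set α} {x x' : Fin n → α} (hx : ∀ i, x i ∈ s)
    (hx' : ∀ i, x' i ∈ s) (m : ℕ) (i : Fin n) : coordPath x x' m i ∈ s := by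
  unfold coordPath; split_ifs
  exacts [hx' i, hx i]

theorem le_coordPath [Preorder α] {x x' : Fin n → α} (h : x ≤ x') (m : ℕ) :
    x ≤ coordPath x x' m := by
  intro i; unfold coordPath; split_ifs
  exacts [h i, le_rfl]

theorem sub_eq_sum_coordPath {G : Type*} [AddCommGroup G] (φ : (Fin n → α) → G)
    (x x' : Fin n → α) :
    φ x' - φ x = ∑ j : Fin n, (φ (coordPath x x' (j + 1)) - φ (coordPath x x' j)) := by
  have h0 : coordPath x x' 0 = x := by funext i; simp [coordPath]
  have hn : coordPath x x' n = x' := by funext i; simp [coordPath]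
  rw [Fin.sum_univ_eq_sum_range (fun m => φ (coordPath x x' (m + 1)) - φ (coordPath x x' m)),
    sum_range_sub (fun m => φ (coordPath x x' m)), h0, hn]

end CoordPath

section MultilinearExt

variable {n : ℕ}

theorem multilinearExt_sub (f g : Finset (Fin n) → ℝ) (x : Fin n → ℝ) :
    multilinearExt (fun S => f S - g S) x = multilinearExt f x - multilinearExt g x := by
  simp only [multilinearExt, sub_mul, sum_sub_distrib]

theorem multilinearExt_nonpos {f : Finset (Fin n) → ℝ} (hf : ∀ S, f S ≤ 0) {x : Fin n → ℝ}
    (hx : ∀ i, x i ∈ Set.Icc (0 : ℝ) 1) : multilinearExt f x ≤ 0 := by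
  refine sum_nonpos fun S _ => mul_nonpos_of_nonpos_of_nonneg (hf S) (mul_nonneg ?_ ?_)
  · exact prod_nonneg fun i _ => (hx i).1
  · exact prod_nonneg fun i _ => sub_nonneg.2 (hx i).2

theorem multilinearExt_eq_sum_powerset_erase (f : Finset (Fin n) → ℝ) (x : Fin n → ℝ)
    (j : Fin n) :
    multilinearExt f x = ∑ T ∈ (univ.erase j).powerset,
      ((1 - x j) * f T + x j * f (insert j T)) *
        ((∏ i ∈ T, x i) * ∏ i ∈ (insert j T)ᶜ, (1 - x i)) := by
  have huniv : (univ : Finset (Finset (Fin n))) = (insert j (univ.erase j)).powerset := by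
    rw [insert_erase (mem_univ j), powerset_univ]
  rw [multilinearExt, huniv, sum_powerset_insert (notMem_erase j univ), ← sum_add_distrib]
  refine sum_congr rfl fun T hT => ?_
  have hjT : j ∉ T := fun h => notMem_erase j univ (mem_powerset.1 hT h)
  rw [prod_insert hjT, compl_insert,
    ← mul_prod_erase Tᶜ (fun i => 1 - x i) (mem_compl.2 hjT)]
  ring

theorem multilinearExt_update (f : Finset (Fin n) → ℝ) (x : Fin n → ℝ) (j : Fin n) (c : ℝ) :
    multilinearExt f (update x j c) =
      (1 - c) * multilinearExt (fun S => f (S.erase j)) x +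
        c * multilinearExt (fun S => f (insert j S)) x := by
  simp only [multilinearExt_eq_sum_powerset_erase _ _ j, mul_sum, ← sum_add_distrib]
  refine sum_congr rfl fun T hT => ?_
  have hjT : j ∉ T := fun h => notMem_erase j univ (mem_powerset.1 hT h)
  have hweight : (∏ i ∈ T, update x j c i) * ∏ i ∈ (insert j T)ᶜ, (1 - update x j c i) =
      (∏ i ∈ T, x i) * ∏ i ∈ (insert j T)ᶜ, (1 - x i) := by
    congr 1 <;> refine prod_congr rfl fun i hi => ?_
    · rw [update_of_ne (ne_of_mem_of_not_mem hi hjT)]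
    · have hij : i ≠ j := by rintro rfl; exact mem_compl.1 hi (mem_insert_self i T)
      rw [update_of_ne hij]
  rw [hweight, update_self, erase_insert hjT, erase_eq_of_notMem hjT, insert_idem]
  ring

theorem multilinearExt_update_one_sub_update_zero (f : Finset (Fin n) → ℝ) (x : Fin n → ℝ)
    (j : Fin n) :
    multilinearExt f (update x j 1) - multilinearExt f (update x j 0) =
      multilinearExt (marginal f j) x := by
  rw [multilinearExt_update, multilinearExt_update]
  unfold marginal
  rw [multilinearExt_sub]
  ring

theorem multilinearExt_update_sub (f : Finset (Fin n) → ℝ) (x : Fin n → ℝ) (j : Fin n) (c : ℝ) :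
    multilinearExt f (update x j c) - multilinearExt f x =
      (c - x j) * multilinearExt (marginal f j) x := by
  have hx := multilinearExt_update f x j (x j)
  rw [update_eq_self] at hx
  rw [multilinearExt_update, hx]
  unfold marginal
  rw [multilinearExt_sub]
  ring

theorem multilinearExt_sub_eq_sum (f : Finset (Fin n) → ℝ) (x x' : Fin n → ℝ) :
    multilinearExt f x' - multilinearExt f x =
      ∑ j : Fin n, (x' j - x j) * multilinearExt (marginal f j) (coordPath x x' j) := by
  rw [sub_eq_sum_coordPath (multilinearExt f)]
  refine sum_congr rfl fun j _ => ?_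
  rw [coordPath_succ, multilinearExt_update_sub, coordPath_apply_self]

theorem Antitone.multilinearExt_le {f : Finset (Fin n) → ℝ} (hf : Antitone f) {x x' : Fin n → ℝ}
    (hx : ∀ i, x i ∈ Set.Icc (0 : ℝ) 1) (hx' : ∀ i, x' i ∈ Set.Icc (0 : ℝ) 1) (hle : x ≤ x') :
    multilinearExt f x' ≤ multilinearExt f x := by
  rw [← sub_nonpos, multilinearExt_sub_eq_sum]
  refine sum_nonpos fun j _ => mul_nonpos_of_nonneg_of_nonpos (sub_nonneg.2 (hle j)) ?_
  exact multilinearExt_nonpos (hf.marginal_nonpos j) (coordPath_mem hx hx' j)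

end MultilinearExt

/-- For a submodular `f` with multilinear extension `F`, `y ∈ [0,1]ⁿ`, `v ≥ 0`
with `y + v ∈ [0,1]ⁿ`,
`F(y + v) − F(y) ≤ ∑_j v_j · (F(y[j:=1]) − F(y[j:=0]))`
(the quantity `F(y[j:=1]) − F(y[j:=0])` is the partial derivative `∂F/∂x_j`). -/
theorem stmt_8 {n : ℕ} (f : Finset (Fin n) → ℝ)
    (hsub : ∀ A B : Finset (Fin n), f A + f B ≥ f (A ∪ B) + f (A ∩ B))
    (y v : Fin n → ℝ)
    (hy : ∀ i, y i ∈ Set.Icc (0 : ℝ) 1) (hv : ∀ i, 0 ≤ v i)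
    (hyv : ∀ i, y i + v i ∈ Set.Icc (0 : ℝ) 1) :
    multilinearExt f (y + v) - multilinearExt f y ≤
      ∑ j : Fin n, v j *
        (multilinearExt f (Function.update y j 1) -
          multilinearExt f (Function.update y j 0)) := by
  have hle : y ≤ y + v := fun i => le_add_of_nonneg_right (hv i)
  rw [multilinearExt_sub_eq_sum]
  refine sum_le_sum fun j _ => ?_
  rw [Pi.add_apply, add_sub_cancel_left, multilinearExt_update_one_sub_update_zero]
  have hmarg : Antitone (marginal f j) := IsSubmodular.antitone_marginal hsub j
  exact mul_le_mul_of_nonneg_left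
    (hmarg.multilinearExt_le hy (coordPath_mem hy hyv j) (le_coordPath hle j)) (hv j)
end

section
/- Let f be a nonnegative submodular function on the ground set {1,…,n} with multilinear extension F. Let y, y', v ∈ ℝ^n with 0 ≤ y ≤ y' componentwise, v ≥ 0 componentwise, and y' + v ∈ [0,1]^n. Then F(y' + v) ≤ F(y + v) + F(y' − y). -/
/-!
`F(x)` is the expected value of `f` on a random set containing each `i` independently with
probability `x i`. For `x, z ≥ 0` with `x + z ≤ 1`, label every element independently `0`, `1`
or `2` with probabilities `x i`, `z i`, `1 - x i - z i`: the elements labelled `0`, those labelled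
`1`, and those labelled `0` or `1` form random sets `A`, `B`, `A ∪ B` with expectations `F(x)`,
`F(z)`, `F(x + z)`. Submodularity and nonnegativity give `f (A ∪ B) ≤ f A + f B` pointwise, hence
`F(x + z) ≤ F(x) + F(z)`; the theorem is the case `x = y + v`, `z = y' - y`.
-/

open Finset

theorem sum_preimage_mul_prod_eq_sum_finset {ι κ R : Type*} [Fintype ι] [DecidableEq ι]
    [Fintype κ] [DecidableEq κ] [CommSemiring R] (g : Finset ι → R) (w : ι → κ → R) (T : Finset κ) :
    ∑ σ : ι → κ, g {i | σ i ∈ T} * ∏ i, w i (σ i) =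
      ∑ S : Finset ι, g S * ((∏ i ∈ S, ∑ k ∈ T, w i k) * ∏ i ∈ Sᶜ, ∑ k ∈ Tᶜ, w i k) := by
  rw [← sum_fiberwise univ (fun σ : ι → κ => ({i | σ i ∈ T} : Finset ι))]
  refine sum_congr rfl fun S _ => ?_
  have hfiber : ({σ | ({i | σ i ∈ T} : Finset ι) = S} : Finset (ι → κ)) =
      Fintype.piFinset fun i => if i ∈ S then T else Tᶜ := by
    ext σ
    simp only [Finset.ext_iff, mem_filter, mem_univ, true_and, Fintype.mem_piFinset]
    refine forall_congr' fun i => ?_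
    split_ifs with hi <;> simp [hi]
  have hprod : (∏ i ∈ S, ∑ k ∈ T, w i k) * ∏ i ∈ Sᶜ, ∑ k ∈ Tᶜ, w i k =
      ∏ i, ∑ k ∈ if i ∈ S then T else Tᶜ, w i k := by
    rw [← prod_mul_prod_compl S]
    congr 1 <;> refine prod_congr rfl fun i hi => ?_ <;> simp_all
  rw [hprod, prod_univ_sum, mul_sum, ← hfiber]
  refine sum_congr rfl fun σ hσ => ?_
  rw [(mem_filter.1 hσ).2]

theorem multilinearExt_eq_sum_labelings {n : ℕ} {κ : Type*} [Fintype κ] [DecidableEq κ]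
    (f : Finset (Fin n) → ℝ) (x : Fin n → ℝ) (w : Fin n → κ → ℝ) (T : Finset κ)
    (hw : ∀ i, ∑ k, w i k = 1) (hT : ∀ i, ∑ k ∈ T, w i k = x i) :
    multilinearExt f x = ∑ σ : Fin n → κ, f {i | σ i ∈ T} * ∏ i, w i (σ i) := by
  have hTc : ∀ i, ∑ k ∈ Tᶜ, w i k = 1 - x i := fun i => by
    rw [← hw i, ← hT i, ← sum_compl_add_sum T, add_sub_cancel_right]
  simp only [sum_preimage_mul_prod_eq_sum_finset, hT, hTc, multilinearExt]

theorem multilinearExt_add_le {n : ℕ} (f : Finset (Fin n) → ℝ)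
    (hf : ∀ A B, f (A ∪ B) ≤ f A + f B) (x z : Fin n → ℝ) (hx : ∀ i, 0 ≤ x i)
    (hz : ∀ i, 0 ≤ z i) (hxz : ∀ i, x i + z i ≤ 1) :
    multilinearExt f (x + z) ≤ multilinearExt f x + multilinearExt f z := by
  set w : Fin n → Fin 3 → ℝ := fun i => ![x i, z i, 1 - (x i + z i)]
  have hw : ∀ i, ∑ k, w i k = 1 := fun i => by simp [w, Fin.sum_univ_three]
  have hw_nonneg : ∀ i k, 0 ≤ w i k := fun i k => by
    fin_cases k <;> simp [w, hx i, hz i, hxz i]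
  rw [multilinearExt_eq_sum_labelings f (x + z) w {0, 1} hw (fun i => by simp [w]),
    multilinearExt_eq_sum_labelings f x w {0} hw (fun i => by simp [w]),
    multilinearExt_eq_sum_labelings f z w {1} hw (fun i => by simp [w]), ← sum_add_distrib]
  refine sum_le_sum fun σ _ => ?_
  have hunion : f {i | σ i ∈ ({0, 1} : Finset (Fin 3))} =
      f (({i | σ i ∈ ({0} : Finset (Fin 3))} : Finset (Fin n)) ∪
        ({i | σ i ∈ ({1} : Finset (Fin 3))} : Finset (Fin n))) := by
    congr 1; ext; simp
  rw [hunion, ← add_mul]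
  exact mul_le_mul_of_nonneg_right (hf _ _) (prod_nonneg fun i _ => hw_nonneg i (σ i))

/-- For a nonnegative submodular `f` with multilinear extension `F`, and vectors
`0 ≤ y ≤ y'`, `v ≥ 0` with `y' + v ∈ [0,1]ⁿ`,
`F(y' + v) ≤ F(y + v) + F(y' − y)`. -/
theorem stmt_10 {n : ℕ} (f : Finset (Fin n) → ℝ)
    (hsub : ∀ A B : Finset (Fin n), f A + f B ≥ f (A ∪ B) + f (A ∩ B))
    (hnonneg : ∀ A : Finset (Fin n), 0 ≤ f A)
    (y y' v : Fin n → ℝ)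
    (hy0 : ∀ i, 0 ≤ y i) (hyy' : ∀ i, y i ≤ y' i) (hv : ∀ i, 0 ≤ v i)
    (hy'v : ∀ i, y' i + v i ∈ Set.Icc (0 : ℝ) 1) :
    multilinearExt f (y' + v) ≤
      multilinearExt f (y + v) + multilinearExt f (y' - y) := by
  have hsplit : y' + v = (y + v) + (y' - y) := by abel
  rw [hsplit]
  refine multilinearExt_add_le f (fun A B => by linarith [hsub A B, hnonneg (A ∩ B)]) _ _
    (fun i => add_nonneg (hy0 i) (hv i)) (fun i => sub_nonneg.2 (hyy' i)) (fun i => ?_)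
  simp only [Pi.add_apply, Pi.sub_apply]
  linarith [(hy'v i).2]
end

section
/- Let f be a nonnegative submodular function on the ground set {1,…,n} (n ≥ 1) with multilinear extension F, and let f_max = max_{1 ≤ i ≤ n} f({i}). Let δ = 1/(8n⁴), let ζ = {p·δ : p an integer, 0 ≤ p ≤ 8n⁴}, let u ∈ [0,1]^n, and let 𝒰 = {y ∈ ℝ^n : 0 ≤ y_i ≤ u_i for all i}. Suppose y ∈ [0,1]^n satisfies F(y) ≥ 0.4·F(z) for every z ∈ 𝒰 ∩ ζ^n. Then for every x ∈ 𝒰, 2.5·F(y) ≥ F(x) − f_max/(4n²). -/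
open Finset

/-
Rounding `x ∈ 𝒰` down coordinatewise to the grid gives `z ∈ 𝒰 ∩ ζⁿ` with `0 ≤ x - z ≤ δ`.
The multilinear extension is affine in each coordinate with slope a convex combination of marginal
values `f (S ∪ {i}) - f S`, which submodularity and nonnegativity bound by `f {i} ≤ f_max`. Moving
one coordinate at a time thus gives `F x ≤ F z + n δ f_max ≤ F z + f_max / (4n²)`, and
`F z ≤ 2.5 F y` by the local-search hypothesis.
-/

section MultilinearExt

variable {n : ℕ}

/-- The probability that the random set drawn from `a`, with coordinate `i` left out, is `T`. -/
noncomputable def coordWeight (a : Fin n → ℝ) (i : Fin n) (T : Finset (Fin n)) : ℝ :=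
  (∏ j ∈ T, a j) * ∏ j ∈ univ.erase i \ T, (1 - a j)

lemma coordWeight_nonneg {a : Fin n → ℝ} (ha0 : ∀ j, 0 ≤ a j) (ha1 : ∀ j, a j ≤ 1)
    (i : Fin n) (T : Finset (Fin n)) : 0 ≤ coordWeight a i T :=
  mul_nonneg (prod_nonneg fun j _ => ha0 j) (prod_nonneg fun j _ => sub_nonneg.2 (ha1 j))

lemma sum_coordWeight (a : Fin n → ℝ) (i : Fin n) :
    ∑ T ∈ (univ.erase i).powerset, coordWeight a i T = 1 := by
  simp only [coordWeight]
  rw [← prod_add]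
  simp

lemma multilinearExt_update_s14 (f : Finset (Fin n) → ℝ) (a : Fin n → ℝ) (i : Fin n) (c : ℝ) :
    multilinearExt f (Function.update a i c) =
      ∑ T ∈ (univ.erase i).powerset, ((1 - c) * f T + c * f (insert i T)) * coordWeight a i T := by
  have huniv : (univ : Finset (Finset (Fin n))) = (insert i (univ.erase i)).powerset := by
    rw [insert_erase (mem_univ i), powerset_univ]
  rw [multilinearExt, huniv, sum_powerset_insert (notMem_erase i univ), ← sum_add_distrib]
  refine sum_congr rfl fun T hT => ?_
  have hiT : i ∉ T := fun h => notMem_erase i univ (mem_powerset.1 hT h)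
  have hcompl : Tᶜ = insert i (univ.erase i \ T) := by
    ext j; by_cases j = i <;> simp_all
  have hcompl_insert : (insert i T)ᶜ = univ.erase i \ T := by
    ext j; simp [and_comm]
  have hi : i ∉ univ.erase i \ T := by simp
  have hrest : ∏ j ∈ univ.erase i \ T, (1 - Function.update a i c j) =
      ∏ j ∈ univ.erase i \ T, (1 - a j) :=
    prod_congr rfl fun j hj => by rw [Function.update_of_ne (ne_of_mem_of_not_mem hj hi)]
  simp only [hcompl, hcompl_insert, prod_insert hi, prod_insert hiT, prod_update_of_notMem hiT,
    hrest, Function.update_self, coordWeight]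
  ring

lemma multilinearExt_update_sub_update (f : Finset (Fin n) → ℝ) (a : Fin n → ℝ) (i : Fin n)
    (s t : ℝ) :
    multilinearExt f (Function.update a i t) - multilinearExt f (Function.update a i s) =
      (t - s) * ∑ T ∈ (univ.erase i).powerset, (f (insert i T) - f T) * coordWeight a i T := by
  rw [multilinearExt_update_s14, multilinearExt_update_s14, ← sum_sub_distrib, mul_sum]
  exact sum_congr rfl fun _ _ => by ring


lemma multilinearExt_update_le {f : Finset (Fin n) → ℝ} {M : ℝ} {i : Fin n}
    (hM : ∀ T, i ∉ T → f (insert i T) - f T ≤ M) {a : Fin n → ℝ} (ha0 : ∀ j, 0 ≤ a j)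
    (ha1 : ∀ j, a j ≤ 1) {s t : ℝ} (hst : s ≤ t) :
    multilinearExt f (Function.update a i t) ≤
      multilinearExt f (Function.update a i s) + (t - s) * M := by
  have hslope : ∑ T ∈ (univ.erase i).powerset, (f (insert i T) - f T) * coordWeight a i T ≤ M :=
    calc _ ≤ ∑ T ∈ (univ.erase i).powerset, M * coordWeight a i T :=
          sum_le_sum fun T hT => mul_le_mul_of_nonneg_right
            (hM T fun h => notMem_erase i univ (mem_powerset.1 hT h))
            (coordWeight_nonneg ha0 ha1 i T)
      _ = M := by rw [← mul_sum, sum_coordWeight, mul_one]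
  linarith [multilinearExt_update_sub_update f a i s t,
    mul_le_mul_of_nonneg_left hslope (sub_nonneg.2 hst)]

lemma multilinearExt_le_add_sum_mul {f : Finset (Fin n) → ℝ} {M : ℝ}
    (hM : ∀ i T, i ∉ T → f (insert i T) - f T ≤ M) {x z : Fin n → ℝ} (hz0 : ∀ i, 0 ≤ z i)
    (hzx : ∀ i, z i ≤ x i) (hx1 : ∀ i, x i ≤ 1) :
    multilinearExt f x ≤ multilinearExt f z + (∑ i, (x i - z i)) * M := by
  suffices h : ∀ T : Finset (Fin n),
      multilinearExt f x ≤ multilinearExt f (T.piecewise z x) + (∑ i ∈ T, (x i - z i)) * M by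
    simpa using h univ
  intro T
  induction T using Finset.induction_on with
  | empty => simp
  | insert i T hiT ih =>
    have hstep := multilinearExt_update_le (hM i)
      (a := T.piecewise z x) (fun j => by by_cases j ∈ T <;> simp_all [(hz0 j).trans (hzx j)])
      (fun j => by by_cases j ∈ T <;> simp_all [(hzx j).trans (hx1 j)]) (hzx i)
    rw [Function.update_eq_self_iff.2 (piecewise_eq_of_notMem _ _ _ hiT).symm] at hstep
    rw [piecewise_insert, sum_insert hiT]
    linarith

end MultilinearExt

lemma sub_le_apply_singleton {α : Type*} [DecidableEq α] {f : Finset α → ℝ}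
    (hsub : ∀ A B : Finset α, f A + f B ≥ f (A ∪ B) + f (A ∩ B)) (hnonneg : ∀ A, 0 ≤ f A)
    (i : α) (S : Finset α) : f (insert i S) - f S ≤ f {i} := by
  have := hsub {i} S
  rw [← insert_eq] at this
  linarith [hnonneg ({i} ∩ S)]

section FloorGrid

variable {x δ : ℝ}

lemma floor_div_mul_le (hx : 0 ≤ x) (hδ : 0 < δ) : (⌊x / δ⌋₊ : ℝ) * δ ≤ x :=
  (le_div_iff₀ hδ).1 (Nat.floor_le (div_nonneg hx hδ.le))

lemma sub_floor_div_mul_lt (hδ : 0 < δ) : x - ⌊x / δ⌋₊ * δ < δ := by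
  have := (div_lt_iff₀ hδ).1 (Nat.lt_floor_add_one (x / δ))
  linarith

lemma floor_div_le_of_le_mul (hδ : 0 < δ) {N : ℕ} (h : x ≤ N * δ) : ⌊x / δ⌋₊ ≤ N :=
  Nat.floor_le_of_le ((div_le_iff₀ hδ).2 h)

end FloorGrid

theorem stmt_14_general {n : ℕ} (hn : 1 ≤ n) (f : Finset (Fin n) → ℝ)
    (hsub : ∀ A B : Finset (Fin n), f A + f B ≥ f (A ∪ B) + f (A ∩ B))
    (hnonneg : ∀ A : Finset (Fin n), 0 ≤ f A)
    (fmax : ℝ)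
    (hfmax : IsGreatest (Set.range fun i : Fin n => f {i}) fmax)
    (δ : ℝ) (hδ : δ = 1 / (8 * (n : ℝ) ^ 4))
    (ζ : Set ℝ) (hζ : ζ = {r : ℝ | ∃ p : ℕ, p ≤ 8 * n ^ 4 ∧ r = p * δ})
    (u : Fin n → ℝ) (hu : ∀ i, u i ∈ Set.Icc (0 : ℝ) 1)
    (y : Fin n → ℝ)
    (hyLS : ∀ z : Fin n → ℝ, (∀ i, 0 ≤ z i ∧ z i ≤ u i) → (∀ i, z i ∈ ζ) →
      multilinearExt f y ≥ 0.4 * multilinearExt f z) :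
    ∀ x : Fin n → ℝ, (∀ i, 0 ≤ x i ∧ x i ≤ u i) →
      2.5 * multilinearExt f y ≥
        multilinearExt f x - fmax / (4 * (n : ℝ) ^ 2) := by
  intro x hx
  have hn' : (1 : ℝ) ≤ n := by exact_mod_cast hn
  have hδ0 : 0 < δ := by rw [hδ]; positivity
  have hfmax0 : 0 ≤ fmax := by obtain ⟨i, rfl⟩ := hfmax.1; exact hnonneg _
  have hx1 : ∀ i, x i ≤ 1 := fun i => (hx i).2.trans (hu i).2
  set z : Fin n → ℝ := fun i => ⌊x i / δ⌋₊ * δ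
  have hzx : ∀ i, z i ≤ x i := fun i => floor_div_mul_le (hx i).1 hδ0
  have hzζ : ∀ i, z i ∈ ζ := fun i => hζ ▸ ⟨_, floor_div_le_of_le_mul hδ0 (by
    rw [hδ]; push_cast; field_simp; exact hx1 i), rfl⟩
  have hFz := hyLS z (fun i => ⟨by positivity, (hzx i).trans (hx i).2⟩) hzζ
  have hFx := multilinearExt_le_add_sum_mul
    (fun i T _ => (sub_le_apply_singleton hsub hnonneg i T).trans (hfmax.2 ⟨i, rfl⟩))
    (fun i => by positivity) hzx hx1
  have hgap : ∑ i, (x i - z i) ≤ n * δ := by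
    simpa using sum_le_sum fun i (_ : i ∈ univ) => (sub_floor_div_mul_lt (x := x i) hδ0).le
  have hnδ : n * δ ≤ 1 / (4 * (n : ℝ) ^ 2) := by
    rw [hδ, mul_one_div, div_le_div_iff₀ (by positivity) (by positivity)]
    nlinarith [pow_le_pow_right₀ hn' (show 3 ≤ 4 by norm_num)]
  have herr : (∑ i, (x i - z i)) * fmax ≤ fmax / (4 * (n : ℝ) ^ 2) := by
    calc _ ≤ 1 / (4 * (n : ℝ) ^ 2) * fmax := mul_le_mul_of_nonneg_right (hgap.trans hnδ) hfmax0
      _ = _ := by ring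
  linarith

/-- guarantee of the extended smooth local search `FMV_Y`.
With `δ = 1/(8n⁴)`, `ζ = {p·δ : p ∈ ℕ, p ≤ 8n⁴}`, an upper-bound vector
`u ∈ [0,1]ⁿ` and `𝒰 = {y : 0 ≤ y ≤ u}`: if `y ∈ [0,1]ⁿ` satisfies
`F(y) ≥ 0.4·F(z)` for every `z ∈ 𝒰 ∩ ζⁿ`, then for every `x ∈ 𝒰`,
`2.5·F(y) ≥ F(x) − f_max/(4n²)`. -/
theorem stmt_14 {n : ℕ} (hn : 1 ≤ n) (f : Finset (Fin n) → ℝ)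
    (hsub : ∀ A B : Finset (Fin n), f A + f B ≥ f (A ∪ B) + f (A ∩ B))
    (hnonneg : ∀ A : Finset (Fin n), 0 ≤ f A)
    (fmax : ℝ)
    (hfmax : IsGreatest (Set.range fun i : Fin n => f {i}) fmax)
    (δ : ℝ) (hδ : δ = 1 / (8 * (n : ℝ) ^ 4))
    (ζ : Set ℝ) (hζ : ζ = {r : ℝ | ∃ p : ℕ, p ≤ 8 * n ^ 4 ∧ r = p * δ})
    (u : Fin n → ℝ) (hu : ∀ i, u i ∈ Set.Icc (0 : ℝ) 1)
    (y : Fin n → ℝ) (hy : ∀ i, y i ∈ Set.Icc (0 : ℝ) 1)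
    (hyLS : ∀ z : Fin n → ℝ, (∀ i, 0 ≤ z i ∧ z i ≤ u i) → (∀ i, z i ∈ ζ) →
      multilinearExt f y ≥ 0.4 * multilinearExt f z) :
    ∀ x : Fin n → ℝ, (∀ i, 0 ≤ x i ∧ x i ≤ u i) →
      2.5 * multilinearExt f y ≥
        multilinearExt f x - fmax / (4 * (n : ℝ) ^ 2) :=
  stmt_14_general hn f hsub hnonneg fmax hfmax δ hδ ζ hζ u hu y hyLS
end

section
/- Let f be a nonnegative submodular function on the ground set {1,…,n} (n ≥ 1) with multilinear extension F, and let f_max = max_{1 ≤ i ≤ n} f({i}). Let x*, y₁, y₂, y₁', y₂', y_m ∈ [0,1]^n and set x' = x* − (x* ∧ y₁). Suppose: (i) F(y₁) ≥ (1 − e^{−1})·(F(x* ∨ y₁) − F(y₁')); (ii) F(y₂) ≥ (1 − e^{−1})·(F(x' ∨ y₂) − F(y₂')); (iii) 2.5·F(y_m) ≥ F(x* ∧ y₁) − f_max/(4n²); (iv) F(x* ∨ y₁) + F(x' ∨ y₂) + F(x* ∧ y₁) ≥ F(x*). Then max{F(y₁), F(y₂), F(y_m), F(y₁'), F(y₂')}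 ≥ ((2e − 2)/(13e − 9)) · (F(x*) − f_max/(4n²)). -/
/-!
Write `M` for the best of the five candidate values and `c = 1 - e⁻¹`. Guarantee (i) gives
`c · F(x* ∨ y₁) ≤ F(y₁) + c · F(y₁') ≤ (1 + c) M`, and likewise (ii) bounds `c · F(x' ∨ y₂)`;
(iii) gives `F(x* ∧ y₁) ≤ 2.5 M + f_max/(4n²)`. Summing these through (iv) yields
`c (F(x*) - f_max/(4n²)) ≤ (2 + 4.5 c) M`, and `c / (2 + 4.5 c) = (2e - 2)/(13e - 9)`.
-/

open Finset

lemma mul_le_one_add_mul_of_le_mul_sub {c a A p M : ℝ} (hc : 0 ≤ c)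
    (h : a ≥ c * (A - p)) (ha : a ≤ M) (hp : p ≤ M) : c * A ≤ (1 + c) * M := by
  have : c * p ≤ c * M := mul_le_mul_of_nonneg_left hp hc
  linarith

lemma mul_sub_le_of_greedy_guarantees {c κ a b m p q A B C X d M : ℝ} (hc : 0 ≤ c)
    (hκ : 0 ≤ κ) (ha : a ≤ M) (hb : b ≤ M) (hm : m ≤ M) (hp : p ≤ M) (hq : q ≤ M)
    (hA : a ≥ c * (A - p)) (hB : b ≥ c * (B - q)) (hC : κ * m ≥ C - d)
    (hX : A + B + C ≥ X) : c * (X - d) ≤ (2 + (2 + κ) * c) * M := by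
  have hcA := mul_le_one_add_mul_of_le_mul_sub hc hA ha hp
  have hcB := mul_le_one_add_mul_of_le_mul_sub hc hB hb hq
  have hκm : κ * m ≤ κ * M := mul_le_mul_of_nonneg_left hm hκ
  have hcC : c * C ≤ c * (κ * M + d) := mul_le_mul_of_nonneg_left (by linarith) hc
  have hcX : c * X ≤ c * (A + B + C) := mul_le_mul_of_nonneg_left hX hc
  linarith

lemma one_sub_exp_neg_one_pos : 0 < 1 - Real.exp (-1) :=
  sub_pos.mpr (Real.exp_lt_one_iff.mpr neg_one_lt_zero)

lemma one_sub_exp_neg_one_div_eq :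
    (1 - Real.exp (-1)) / (2 + (2 + 2.5) * (1 - Real.exp (-1))) =
      (2 * Real.exp 1 - 2) / (13 * Real.exp 1 - 9) := by
  have hc := one_sub_exp_neg_one_pos
  have he : 1 < Real.exp 1 := Real.one_lt_exp_iff.mpr one_pos
  rw [div_eq_div_iff (by positivity) (by linarith), Real.exp_neg]
  field_simp
  ring

theorem stmt_15_general {n : ℕ} (f : Finset (Fin n) → ℝ)
    (fmax : ℝ)
    (xs y₁ y₂ y₁' y₂' ym x' : Fin n → ℝ)
    (h1 : multilinearExt f y₁ ≥ (1 - Real.exp (-1)) *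
      (multilinearExt f (fun i => max (xs i) (y₁ i)) - multilinearExt f y₁'))
    (h2 : multilinearExt f y₂ ≥ (1 - Real.exp (-1)) *
      (multilinearExt f (fun i => max (x' i) (y₂ i)) - multilinearExt f y₂'))
    (h3 : 2.5 * multilinearExt f ym ≥
      multilinearExt f (fun i => min (xs i) (y₁ i)) - fmax / (4 * (n : ℝ) ^ 2))
    (h4 : multilinearExt f (fun i => max (xs i) (y₁ i)) +
        multilinearExt f (fun i => max (x' i) (y₂ i)) +
        multilinearExt f (fun i => min (xs i) (y₁ i)) ≥
      multilinearExt f xs) :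
    max (multilinearExt f y₁) (max (multilinearExt f y₂)
        (max (multilinearExt f ym)
          (max (multilinearExt f y₁') (multilinearExt f y₂')))) ≥
      ((2 * Real.exp 1 - 2) / (13 * Real.exp 1 - 9)) *
        (multilinearExt f xs - fmax / (4 * (n : ℝ) ^ 2)) := by
  have hc := one_sub_exp_neg_one_pos
  have key := mul_sub_le_of_greedy_guarantees hc.le (by norm_num) (le_max_left _ _)
    (le_max_of_le_right (le_max_left _ _))
    (le_max_of_le_right (le_max_of_le_right (le_max_left _ _)))
    (le_max_of_le_right (le_max_of_le_right (le_max_of_le_right (le_max_left _ _))))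
    (le_max_of_le_right (le_max_of_le_right (le_max_of_le_right (le_max_right _ _))))
    h1 h2 h3 h4
  rw [← one_sub_exp_neg_one_div_eq, ge_iff_le, div_mul_eq_mul_div, div_le_iff₀ (by positivity)]
  linarith

/-- guarantee of the continuous-greedy-based algorithm for a
solvable packing polytope, stated conditionally on the subroutine guarantees.
Given points `x*, y₁, y₂, y₁', y₂', y_m ∈ [0,1]ⁿ` with `x' = x* − (x* ∧ y₁)`
satisfying (i)–(iv), the best of the five candidate values is at least
`((2e − 2)/(13e − 9))·(F(x*) − f_max/(4n²))`. -/
theorem stmt_15 {n : ℕ} (hn : 1 ≤ n) (f : Finset (Fin n) → ℝ)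
    (hsub : ∀ A B : Finset (Fin n), f A + f B ≥ f (A ∪ B) + f (A ∩ B))
    (hnonneg : ∀ A : Finset (Fin n), 0 ≤ f A)
    (fmax : ℝ)
    (hfmax : IsGreatest (Set.range fun i : Fin n => f {i}) fmax)
    (xs y₁ y₂ y₁' y₂' ym x' : Fin n → ℝ)
    (hxs : ∀ i, xs i ∈ Set.Icc (0 : ℝ) 1)
    (hy₁ : ∀ i, y₁ i ∈ Set.Icc (0 : ℝ) 1)
    (hy₂ : ∀ i, y₂ i ∈ Set.Icc (0 : ℝ) 1)
    (hy₁' : ∀ i, y₁' i ∈ Set.Icc (0 : ℝ) 1)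
    (hy₂' : ∀ i, y₂' i ∈ Set.Icc (0 : ℝ) 1)
    (hym : ∀ i, ym i ∈ Set.Icc (0 : ℝ) 1)
    (hx' : ∀ i, x' i = xs i - min (xs i) (y₁ i))
    (h1 : multilinearExt f y₁ ≥ (1 - Real.exp (-1)) *
      (multilinearExt f (fun i => max (xs i) (y₁ i)) - multilinearExt f y₁'))
    (h2 : multilinearExt f y₂ ≥ (1 - Real.exp (-1)) *
      (multilinearExt f (fun i => max (x' i) (y₂ i)) - multilinearExt f y₂'))
    (h3 : 2.5 * multilinearExt f ym ≥
      multilinearExt f (fun i => min (xs i) (y₁ i)) - fmax / (4 * (n : ℝ) ^ 2))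
    (h4 : multilinearExt f (fun i => max (xs i) (y₁ i)) +
        multilinearExt f (fun i => max (x' i) (y₂ i)) +
        multilinearExt f (fun i => min (xs i) (y₁ i)) ≥
      multilinearExt f xs) :
    max (multilinearExt f y₁) (max (multilinearExt f y₂)
        (max (multilinearExt f ym)
          (max (multilinearExt f y₁') (multilinearExt f y₂')))) ≥
      ((2 * Real.exp 1 - 2) / (13 * Real.exp 1 - 9)) *
        (multilinearExt f xs - fmax / (4 * (n : ℝ) ^ 2)) :=
  stmt_15_general f fmax xs y₁ y₂ y₁' y₂' ym x' h1 h2 h3 h4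
end
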